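/- arXiv:2406.12744 — 3 statements merged into one kernel-verified Lean document; each statement's English description precedes it below -/
import Mathlib

section
/- If M ∈ ℝ^{n×n} is Metzler and Hurwitz (all eigenvalues have negative real part), then there exists a vector v ∈ ℝ^n with all entries strictly positive such that the row vector vᵀM has all entries strictly negative. -/
open Filter Matrix
open scoped Topology ENNReal NNReal

lemma aux_mem_spectrum_iff_det {n : ℕ} (A : Matrix (Fin n) (Fin n) ℂ) (μ : ℂ) :
    μ ∈ spectrum ℂ A ↔ (μ • (1 : Matrix (Fin n) (Fin n) ℂ) - A).det = 0 := by
  rw [spectrum.mem_iff, Matrix.isUnit_iff_isUnit_det, isUnit_iff_ne_zero, not_not,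
    Algebra.algebraMap_eq_smul_one]

lemma aux_spec_eig {n : ℕ} (A : Matrix (Fin n) (Fin n) ℂ) (μ : ℂ) :
    μ ∈ spectrum ℂ A ↔ Module.End.HasEigenvalue (Matrix.toLin' A) μ := by
  rw [Module.End.hasEigenvalue_iff_mem_spectrum,
    ← AlgEquiv.spectrum_eq (Matrix.toLinAlgEquiv' (R := ℂ) (n := Fin n)) A]
  rfl

lemma aux_spec_finite {n : ℕ} (A : Matrix (Fin n) (Fin n) ℂ) : (spectrum ℂ A).Finite := by
  have h := Module.End.finite_hasEigenvalue (f := Matrix.toLin' A)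
  exact h.subset fun μ hμ => (aux_spec_eig A μ).mp hμ

lemma aux_pow_tendsto {n : ℕ} (B : Matrix (Fin n) (Fin n) ℝ)
    (h : ∀ ν ∈ spectrum ℂ ((algebraMap ℝ ℂ).mapMatrix B), ‖ν‖₊ < 1) (i j : Fin n) :
    Tendsto (fun k => (B ^ k) i j) atTop (𝓝 0) := by
  letI : NormedRing (Matrix (Fin n) (Fin n) ℂ) := Matrix.linftyOpNormedRing
  letI : NormedAlgebra ℂ (Matrix (Fin n) (Fin n) ℂ) := Matrix.linftyOpNormedAlgebra
  set Bc := (algebraMap ℝ ℂ).mapMatrix B with hBc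
  have hentry : ∀ (A : Matrix (Fin n) (Fin n) ℂ), ‖A i j‖ ≤ ‖A‖ := by
    intro A
    have h1 : ‖A i j‖₊ ≤ ∑ j', ‖A i j'‖₊ :=
      Finset.single_le_sum (f := fun j' => ‖A i j'‖₊) (fun _ _ => zero_le) (Finset.mem_univ j)
    have h2 : (∑ j', ‖A i j'‖₊) ≤ Finset.univ.sup fun i' => ∑ j', ‖A i' j'‖₊ :=
      Finset.le_sup (f := fun i' => ∑ j', ‖A i' j'‖₊) (Finset.mem_univ i)
    have h3 := h1.trans h2
    rw [← Matrix.linfty_opNNNorm_def] at h3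
    exact h3
  have hfin := aux_spec_finite Bc
  have hrlt : hfin.toFinset.sup (fun ν => ‖ν‖₊) < 1 := by
    rw [Finset.sup_lt_iff (by norm_num : (⊥ : ℝ≥0) < 1)]
    intro ν hν
    exact h ν (hfin.mem_toFinset.mp hν)
  have hrad : spectralRadius ℂ Bc < 1 := by
    have hle : spectralRadius ℂ Bc ≤ ((hfin.toFinset.sup fun ν => ‖ν‖₊ : ℝ≥0) : ℝ≥0∞) := by
      rw [spectralRadius]
      exact iSup₂_le fun ν hν => ENNReal.coe_le_coe.mpr (Finset.le_sup (hfin.mem_toFinset.mpr hν))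
    refine hle.trans_lt ?_
    exact_mod_cast hrlt
  obtain ⟨c, hc1, hc2⟩ := exists_between hrad
  have hctop : c ≠ ⊤ := (hc2.trans_le le_top).ne
  have hcc : (c.toNNReal : ℝ≥0∞) = c := ENNReal.coe_toNNReal hctop
  have hcn1 : (c.toNNReal : ℝ) < 1 := by
    have : (c.toNNReal : ℝ≥0∞) < 1 := by rw [hcc]; exact hc2
    exact_mod_cast this
  have hev := (spectrum.pow_nnnorm_pow_one_div_tendsto_nhds_spectralRadius Bc).eventually_lt_const hc1
  have hnorm : Tendsto (fun k => ‖Bc ^ k‖) atTop (𝓝 0) := by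
    apply squeeze_zero' (Eventually.of_forall fun k => norm_nonneg _) ?_
      (tendsto_pow_atTop_nhds_zero_of_lt_one c.toNNReal.coe_nonneg hcn1)
    filter_upwards [hev, eventually_ge_atTop 1] with k hk hk1
    have hk0 : (0:ℝ) < (k : ℝ) := by exact_mod_cast hk1
    have h2 := ENNReal.rpow_lt_rpow hk hk0
    rw [← ENNReal.rpow_mul, one_div, inv_mul_cancel₀ hk0.ne', ENNReal.rpow_one,
      ENNReal.rpow_natCast] at h2
    have h3 : ‖Bc ^ k‖₊ ≤ c.toNNReal ^ k := by
      have h4 : ((‖Bc ^ k‖₊ : ℝ≥0) : ℝ≥0∞) < ((c.toNNReal ^ k : ℝ≥0) : ℝ≥0∞) := by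
        rw [ENNReal.coe_pow, hcc]
        exact h2
      exact (ENNReal.coe_lt_coe.mp h4).le
    calc ‖Bc ^ k‖ = ((‖Bc ^ k‖₊ : ℝ≥0) : ℝ) := rfl
      _ ≤ ((c.toNNReal ^ k : ℝ≥0) : ℝ) := by exact_mod_cast h3
      _ = (c.toNNReal : ℝ) ^ k := by push_cast; ring
  apply squeeze_zero_norm' ?_ hnorm
  filter_upwards with k
  have hmap : (Bc ^ k) i j = (((B ^ k) i j : ℝ) : ℂ) := by
    rw [hBc, ← map_pow]
    simp [RingHom.mapMatrix_apply]
  have : ‖(B ^ k) i j‖ = ‖(Bc ^ k) i j‖ := by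
    rw [hmap, Complex.norm_real]
  rw [this]
  exact hentry _


def Metzler {n : ℕ} (M : Matrix (Fin n) (Fin n) ℝ) : Prop :=
  ∀ i j, i ≠ j → 0 ≤ M i j

def Hurwitz {n : ℕ} (M : Matrix (Fin n) (Fin n) ℝ) : Prop :=
  ∀ μ : ℂ, Module.End.HasEigenvalue (Matrix.toLin' (M.map (fun a => (a : ℂ)))) μ → μ.re < 0

theorem metzler_hurwitz_exists_positive_vector {n : ℕ} (M : Matrix (Fin n) (Fin n) ℝ)
    (hMet : Metzler M) (hHur : Hurwitz M) :
    ∃ v : Fin n → ℝ, (∀ i, 0 < v i) ∧ ∀ j, Matrix.vecMul v M j < 0 := by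
  classical
  set Mc : Matrix (Fin n) (Fin n) ℂ := M.map (fun a => (a : ℂ)) with hMcdef
  have hspec : ∀ μ ∈ spectrum ℂ Mc, μ.re < 0 := fun μ h => hHur μ ((aux_spec_eig Mc μ).mp h)
  have hfin := aux_spec_finite Mc
  set F := hfin.toFinset with hF
  have hmemF : ∀ μ ∈ F, μ ∈ spectrum ℂ Mc := fun μ hμ => hfin.mem_toFinset.mp hμ
  have hterm : ∀ μ ∈ F, 0 ≤ ‖μ‖^2 / (2 * (-μ.re)) := by
    intro μ hμ
    have h1 := hspec μ (hmemF μ hμ)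
    have h2 : 0 < -μ.re := by linarith
    positivity
  set s : ℝ := 1 + (∑ i, |M i i|) + ∑ μ ∈ F, ‖μ‖^2 / (2 * (-μ.re)) with hsdef
  have hsumabs : (0:ℝ) ≤ ∑ i, |M i i| := Finset.sum_nonneg fun i _ => abs_nonneg _
  have hsumF : (0:ℝ) ≤ ∑ μ ∈ F, ‖μ‖^2 / (2 * (-μ.re)) := Finset.sum_nonneg hterm
  have hs0 : 0 < s := by rw [hsdef]; linarith
  have hsd : ∀ i, 0 ≤ M i i + s := by
    intro i
    have h1 : |M i i| ≤ ∑ i', |M i' i'| :=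
      Finset.single_le_sum (f := fun i' => |M i' i'|) (fun _ _ => abs_nonneg _) (Finset.mem_univ i)
    have h2 := neg_abs_le (M i i)
    rw [hsdef]; linarith
  have hsμ : ∀ μ ∈ spectrum ℂ Mc, ‖μ + (s:ℂ)‖ < s := by
    intro μ hμ
    have hre := hspec μ hμ
    have hgt : ‖μ‖^2 / (2 * (-μ.re)) < s := by
      have h1 : ‖μ‖^2 / (2 * (-μ.re)) ≤ ∑ μ' ∈ F, ‖μ'‖^2 / (2 * (-μ'.re)) :=
        Finset.single_le_sum hterm (hfin.mem_toFinset.mpr hμ)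
      rw [hsdef]; linarith
    have hmul : ‖μ‖^2 < s * (2 * (-μ.re)) := by
      rw [div_lt_iff₀ (by linarith : 0 < 2 * (-μ.re))] at hgt
      linarith
    have hn1 : ‖μ + (s:ℂ)‖^2 = (μ.re + s)^2 + μ.im^2 := by
      rw [Complex.sq_norm, Complex.normSq_apply]
      simp [Complex.add_re, Complex.add_im]
      ring
    have hn2 : ‖μ‖^2 = μ.re^2 + μ.im^2 := by
      rw [Complex.sq_norm, Complex.normSq_apply]
      ring
    have hsq : ‖μ + (s:ℂ)‖^2 < s^2 := by
      rw [hn1]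
      rw [hn2] at hmul
      nlinarith
    exact lt_of_pow_lt_pow_left₀ 2 hs0.le hsq
  set B : Matrix (Fin n) (Fin n) ℝ := s⁻¹ • (M + s • 1) with hBdef
  have hBab : ∀ a b, B a b = s⁻¹ * (M a b + s * (if a = b then 1 else 0)) := by
    intro a b
    rw [hBdef]
    simp [Matrix.smul_apply, Matrix.add_apply, Matrix.one_apply, mul_ite]
  have hB : ∀ a b, 0 ≤ B a b := by
    intro a b
    rw [hBab]
    by_cases hab : a = b
    · subst hab
      rw [if_pos rfl, mul_one]
      exact mul_nonneg (by positivity) (hsd a)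
    · simp only [if_neg hab, mul_zero, add_zero]
      exact mul_nonneg (by positivity) (hMet a b hab)
  have hdetM : IsUnit M.det := by
    rw [isUnit_iff_ne_zero]
    intro hdet0
    have h0 : (0:ℂ) ∉ spectrum ℂ Mc := fun h => absurd (hspec 0 h) (by norm_num)
    apply h0
    rw [aux_mem_spectrum_iff_det]
    have hMceq : Mc = (algebraMap ℝ ℂ).mapMatrix M := by
      ext a b
      simp [hMcdef, RingHom.mapMatrix_apply, Matrix.map_apply, Complex.coe_algebraMap]
    have : Mc.det = ((M.det : ℝ) : ℂ) := by
      rw [hMceq, ← RingHom.map_det]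
      simp [Complex.coe_algebraMap]
    simp only [zero_smul, zero_sub, Matrix.det_neg, this, hdet0]
    simp
  -- spectrum of B over ℂ is inside the open unit ball
  have hBspec : ∀ ν ∈ spectrum ℂ ((algebraMap ℝ ℂ).mapMatrix B), ‖ν‖₊ < 1 := by
    intro ν hν
    rw [aux_mem_spectrum_iff_det] at hν
    have hsne : (s:ℂ) ≠ 0 := by exact_mod_cast hs0.ne'
    have hmat : ν • (1 : Matrix (Fin n) (Fin n) ℂ) - (algebraMap ℝ ℂ).mapMatrix B
        = (s:ℂ)⁻¹ • (((s:ℂ) * ν - (s:ℂ)) • (1 : Matrix (Fin n) (Fin n) ℂ) - Mc) := by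
      ext a b
      simp only [Matrix.sub_apply, Matrix.smul_apply, Matrix.one_apply,
        RingHom.mapMatrix_apply, Matrix.map_apply, hMcdef, smul_eq_mul]
      rw [hBab a b]
      by_cases hab : a = b
      · subst hab
        simp only [if_pos rfl, mul_one]
        push_cast
        simp only [Complex.coe_algebraMap]
        field_simp
        ring
      · simp only [if_neg hab, mul_zero, add_zero, mul_zero]
        push_cast
        simp only [Complex.coe_algebraMap]
        field_simp
        ring
    rw [hmat, Matrix.det_smul] at hν
    have hinv_ne : ((s:ℂ)⁻¹) ^ Fintype.card (Fin n) ≠ 0 := pow_ne_zero _ (inv_ne_zero hsne)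
    have hdet2 : (((s:ℂ) * ν - (s:ℂ)) • (1 : Matrix (Fin n) (Fin n) ℂ) - Mc).det = 0 := by
      rcases mul_eq_zero.mp hν with h | h
      · exact absurd h hinv_ne
      · exact h
    have hmem : (s:ℂ) * ν - (s:ℂ) ∈ spectrum ℂ Mc := (aux_mem_spectrum_iff_det Mc _).mpr hdet2
    have h1 := hsμ _ hmem
    have h2 : ‖(s:ℂ) * ν‖ < s := by
      have : (s:ℂ) * ν - (s:ℂ) + (s:ℂ) = (s:ℂ) * ν := by ring
      rwa [this] at h1
    rw [norm_mul, Complex.norm_real, Real.norm_eq_abs, abs_of_pos hs0] at h2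
    have hν1 : ‖ν‖ < 1 := (mul_lt_iff_lt_one_right hs0).mp h2
    rw [← NNReal.coe_lt_coe]
    simpa [coe_nnnorm] using hν1
  -- matrix algebra identities
  have hM_eq : M = s • (B - 1) := by
    have h1 : s • B = M + s • (1 : Matrix (Fin n) (Fin n) ℝ) := by
      rw [hBdef, smul_smul, mul_inv_cancel₀ hs0.ne', one_smul]
    rw [smul_sub, h1]; abel
  have hgeom : ∀ K, M * (∑ k ∈ Finset.range K, B ^ k)
      = s • B ^ K - s • (1 : Matrix (Fin n) (Fin n) ℝ) := by
    intro K
    conv_lhs => rw [hM_eq]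
    rw [Matrix.smul_mul, mul_geom_sum, smul_sub]
  have hP : ∀ K, (∑ k ∈ Finset.range K, B ^ k) = s • (M⁻¹ * B ^ K) - s • M⁻¹ := by
    intro K
    have h2 : M⁻¹ * (M * (∑ k ∈ Finset.range K, B ^ k)) = ∑ k ∈ Finset.range K, B ^ k := by
      rw [← Matrix.mul_assoc, Matrix.nonsing_inv_mul _ hdetM, Matrix.one_mul]
    rw [hgeom K, Matrix.mul_sub, Matrix.mul_smul, Matrix.mul_smul, Matrix.mul_one] at h2
    exact h2.symm
  have hpow0 : ∀ k (a b : Fin n), 0 ≤ (B ^ k) a b := by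
    intro k
    induction k with
    | zero => intro a b; simp [Matrix.one_apply]; split <;> norm_num
    | succ k ih =>
      intro a b
      rw [pow_succ, Matrix.mul_apply]
      exact Finset.sum_nonneg fun l _ => mul_nonneg (ih a l) (hB l b)
  have hMinv : ∀ i j, M⁻¹ i j ≤ 0 := by
    intro i j
    have hPij : ∀ K, (∑ k ∈ Finset.range K, B ^ k) i j
        = s * (∑ l, M⁻¹ i l * (B ^ K) l j) - s * M⁻¹ i j := by
      intro K
      rw [hP K]
      simp [Matrix.sub_apply, Matrix.smul_apply, Matrix.mul_apply, smul_eq_mul]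
    have hlim1 : Tendsto (fun K => ∑ l, M⁻¹ i l * (B ^ K) l j) atTop (𝓝 0) := by
      have := tendsto_finset_sum Finset.univ
        (fun l (_ : l ∈ Finset.univ) => (aux_pow_tendsto B hBspec l j).const_mul (M⁻¹ i l))
      simpa using this
    have hlim : Tendsto (fun K => (∑ k ∈ Finset.range K, B ^ k) i j) atTop
        (𝓝 (s * 0 - s * M⁻¹ i j)) := by
      refine Tendsto.congr (fun K => (hPij K).symm) ?_
      exact (hlim1.const_mul s).sub tendsto_const_nhds
    have hnonneg : ∀ K, 0 ≤ (∑ k ∈ Finset.range K, B ^ k) i j := by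
      intro K
      rw [Matrix.sum_apply]
      exact Finset.sum_nonneg fun k _ => hpow0 k i j
    have hge : (0:ℝ) ≤ s * 0 - s * M⁻¹ i j := ge_of_tendsto' hlim hnonneg
    nlinarith
  -- construct v
  set v : Fin n → ℝ := fun i => ∑ l, -(M⁻¹ l i) with hvdef
  have hv0 : ∀ i, 0 ≤ v i := fun i => Finset.sum_nonneg fun l _ => neg_nonneg.mpr (hMinv l i)
  have hvM : ∀ j, Matrix.vecMul v M j = -1 := by
    have hvv : v = Matrix.vecMul (fun _ => (1:ℝ)) (-M⁻¹) := by
      ext i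
      simp [hvdef, Matrix.vecMul, dotProduct]
    intro j
    rw [hvv, Matrix.vecMul_vecMul, Matrix.neg_mul, Matrix.nonsing_inv_mul _ hdetM]
    simp [Matrix.vecMul, dotProduct, Matrix.neg_apply, Matrix.one_apply]
  refine ⟨v, ?_, fun j => by rw [hvM j]; norm_num⟩
  intro i
  rcases (hv0 i).lt_or_eq with h | h
  · exact h
  · exfalso
    have hsum : Matrix.vecMul v M i = ∑ k, v k * M k i := by
      simp [Matrix.vecMul, dotProduct]
    have hge : 0 ≤ Matrix.vecMul v M i := by
      rw [hsum]
      refine Finset.sum_nonneg fun k _ => ?_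
      by_cases hk : k = i
      · subst hk
        rw [← h, zero_mul]
      · exact mul_nonneg (hv0 k) (hMet k i hk)
    rw [hvM i] at hge
    linarith
end

section
/- If M is Metzler and there exists a strictly positive vector v and ε > 0 with vᵀM ≤ -ε vᵀ entrywise, then M is Hurwitz. -/
theorem positive_vector_implies_hurwitz {n : ℕ} (M : Matrix (Fin n) (Fin n) ℝ)
    (hMet : Metzler M) (v : Fin n → ℝ) (hv : ∀ i, 0 < v i) (ε : ℝ) (hε : 0 < ε)
    (h : ∀ j, Matrix.vecMul v M j ≤ -ε * v j) : Hurwitz M := by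
  intro μ hμ
  obtain ⟨x, hxev⟩ := hμ.exists_hasEigenvector
  have hx0 : x ≠ 0 := hxev.2
  have hxeq : (M.map (fun a => (a : ℂ))).mulVec x = μ • x := by
    rw [← Matrix.toLin'_apply]; exact hxev.apply_eq_smul
  have hcomp : ∀ i, (∑ j, (M i j : ℂ) * x j) = μ * x i := by
    intro i
    have := congrFun hxeq i
    simpa [Matrix.mulVec, dotProduct, Matrix.map_apply] using this
  set a : Fin n → ℝ := fun i => ‖x i‖ with ha
  have hanonneg : ∀ i, 0 ≤ a i := fun i => norm_nonneg _
  have hkey : ∀ i, μ.re * a i ≤ ∑ j, M i j * a j := by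
    intro i
    by_cases hxi : x i = 0
    · have : a i = 0 := by simp [ha, hxi]
      rw [this, mul_zero]
      apply Finset.sum_nonneg
      intro j _
      by_cases hji : j = i
      · simp [hji, ha, hxi]
      · exact mul_nonneg (hMet i j (Ne.symm hji)) (hanonneg j)
    · have hb : 0 < a i := by simpa [ha] using norm_pos_iff.mpr hxi
      have h2 : μ.re * (a i * a i) ≤ (∑ j, M i j * a j) * a i := by
        have hconj : x i * (starRingEnd ℂ) (x i) = ((a i * a i : ℝ) : ℂ) := by
          rw [Complex.mul_conj]
          norm_cast
          rw [← Complex.sq_norm]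
          ring
        have hre : (μ * x i * (starRingEnd ℂ) (x i)).re = μ.re * (a i * a i) := by
          rw [mul_assoc, hconj]
          simp [Complex.mul_re]
        have heq : μ * x i * (starRingEnd ℂ) (x i) =
            ∑ j, (M i j : ℂ) * (x j * (starRingEnd ℂ) (x i)) := by
          rw [← hcomp i, Finset.sum_mul]
          congr 1; ext j; ring
        have hterm : ∀ j, ((M i j : ℂ) * (x j * (starRingEnd ℂ) (x i))).re
            ≤ M i j * (a j * a i) := by
          intro j
          rw [Complex.re_ofReal_mul]
          by_cases hji : j = i
          · subst hji
            rw [hconj]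
            simp
          · have h1 : (x j * (starRingEnd ℂ) (x i)).re ≤ a j * a i := by
              calc (x j * (starRingEnd ℂ) (x i)).re ≤ ‖x j * (starRingEnd ℂ) (x i)‖ :=
                    Complex.re_le_norm _
                _ = a j * a i := by simp [ha, map_mul]
            exact mul_le_mul_of_nonneg_left h1 (hMet i j (Ne.symm hji))
        calc μ.re * (a i * a i) = (μ * x i * (starRingEnd ℂ) (x i)).re := hre.symm
          _ = ∑ j, ((M i j : ℂ) * (x j * (starRingEnd ℂ) (x i))).re := by
              rw [heq, Complex.re_sum]
          _ ≤ ∑ j, M i j * (a j * a i) := Finset.sum_le_sum fun j _ => hterm j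
          _ = (∑ j, M i j * a j) * a i := by rw [Finset.sum_mul]; congr 1; ext j; ring
      exact le_of_mul_le_mul_right (by rw [mul_assoc]; exact h2) hb
  set s : ℝ := ∑ i, v i * a i with hs
  have hspos : 0 < s := by
    have hne : ∃ i, x i ≠ 0 := by
      by_contra hc
      push_neg at hc
      exact hx0 (funext hc)
    obtain ⟨i0, hi0⟩ := hne
    apply Finset.sum_pos'
    · intro i _
      exact mul_nonneg (hv i).le (hanonneg i)
    · exact ⟨i0, Finset.mem_univ _, mul_pos (hv i0) (by simpa [ha] using norm_pos_iff.mpr hi0)⟩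
  have hsum : μ.re * s ≤ -ε * s := by
    calc μ.re * s = ∑ i, v i * (μ.re * a i) := by
          rw [hs, Finset.mul_sum]; congr 1; ext i; ring
      _ ≤ ∑ i, v i * (∑ j, M i j * a j) :=
          Finset.sum_le_sum fun i _ => mul_le_mul_of_nonneg_left (hkey i) (hv i).le
      _ = ∑ i, ∑ j, v i * (M i j * a j) := by simp_rw [Finset.mul_sum]
      _ = ∑ j, ∑ i, v i * (M i j * a j) := Finset.sum_comm
      _ = ∑ j, (Matrix.vecMul v M j) * a j := by
          congr 1; ext j
          rw [Matrix.vecMul, dotProduct, Finset.sum_mul]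
          congr 1; ext i; ring
      _ ≤ ∑ j, (-ε * v j) * a j :=
          Finset.sum_le_sum fun j _ => mul_le_mul_of_nonneg_right (h j) (hanonneg j)
      _ = -ε * s := by rw [hs, Finset.mul_sum]; congr 1; ext j; ring
  have hle : μ.re ≤ -ε := le_of_mul_le_mul_right hsum hspos
  linarith
end

section
/- If A + BΓ₂C is Metzler and Hurwitz, where Γ₂ = c^q ∏_{i=1}^{q+1}|Wⁱ| ≥ 0, B ≥ 0, C ≥ 0, and x : [0,∞) → ℝ^n is a nonnegative differentiable trajectory of ẋ = Ax + Bπ(Cx) where π(z) ≤ Γ₂z for all z ≥ 0, then for the strictly positive vector v with vᵀ(A+BΓ₂C) ≤ -εvᵀ, the function t ↦ e^{εt} vᵀx(t) is nonincreasing. -/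
open Matrix in
theorem exp_weighted_lyapunov_antitone {n m p : ℕ}
    (A : Matrix (Fin n) (Fin n) ℝ) (B : Matrix (Fin n) (Fin m) ℝ)
    (C : Matrix (Fin p) (Fin n) ℝ) (Γ₂ : Matrix (Fin m) (Fin p) ℝ)
    (hB : ∀ i j, 0 ≤ B i j) (hC : ∀ i j, 0 ≤ C i j) (hΓ₂ : ∀ i j, 0 ≤ Γ₂ i j)
    (hMet : Metzler (A + B * Γ₂ * C)) (hHur : Hurwitz (A + B * Γ₂ * C))
    (π : (Fin p → ℝ) → (Fin m → ℝ))
    (hπ : ∀ z : Fin p → ℝ, 0 ≤ z → π z ≤ Γ₂.mulVec z)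
    (x : ℝ → Fin n → ℝ)
    (hx : ∀ t, 0 ≤ t →
      HasDerivAt x (A.mulVec (x t) + B.mulVec (π (C.mulVec (x t)))) t)
    (hpos : ∀ t, 0 ≤ t → 0 ≤ x t)
    (v : Fin n → ℝ) (hv : ∀ i, 0 < v i) (ε : ℝ) (hε : 0 < ε)
    (hvM : ∀ j, Matrix.vecMul v (A + B * Γ₂ * C) j ≤ -ε * v j) :
    AntitoneOn (fun t => Real.exp (ε * t) * ∑ i, v i * x t i) (Set.Ici (0 : ℝ)) := by
  set f : ℝ → ℝ := fun t => Real.exp (ε * t) * ∑ i, v i * x t i with hf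
  have hV : ∀ t, 0 ≤ t → HasDerivAt f
      (Real.exp (ε * t) * ε * (∑ i, v i * x t i)
        + Real.exp (ε * t) * (∑ i, v i * (A.mulVec (x t) + B.mulVec (π (C.mulVec (x t)))) i)) t := by
    intro t ht
    have he : HasDerivAt (fun s => Real.exp (ε * s)) (Real.exp (ε * t) * ε) t := by
      simpa using ((hasDerivAt_id t).const_mul ε).exp
    have hS : HasDerivAt (fun s => ∑ i, v i * x s i)
        (∑ i, v i * (A.mulVec (x t) + B.mulVec (π (C.mulVec (x t)))) i) t := by
      apply HasDerivAt.fun_sum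
      intro i _
      exact ((hasDerivAt_pi.1 (hx t ht)) i).const_mul (v i)
    exact he.mul hS
  have hD : ∀ t, 0 ≤ t →
      Real.exp (ε * t) * ε * (∑ i, v i * x t i)
        + Real.exp (ε * t) * (∑ i, v i * (A.mulVec (x t) + B.mulVec (π (C.mulVec (x t)))) i) ≤ 0 := by
    intro t ht
    have hxpos := hpos t ht
    have hCx : 0 ≤ C.mulVec (x t) := by
      intro i
      simp only [Matrix.mulVec, dotProduct, Pi.zero_apply]
      exact Finset.sum_nonneg fun j _ => mul_nonneg (hC i j) (hxpos j)
    have key : ∑ i, v i * (A.mulVec (x t) + B.mulVec (π (C.mulVec (x t)))) i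
        ≤ -ε * (∑ i, v i * x t i) := by
      have h1 : ∑ i, v i * (A.mulVec (x t) + B.mulVec (π (C.mulVec (x t)))) i
          = Matrix.vecMul v A ⬝ᵥ (x t) + Matrix.vecMul v B ⬝ᵥ (π (C.mulVec (x t))) := by
        simp only [Pi.add_apply, mul_add, Finset.sum_add_distrib]
        rw [← Matrix.dotProduct_mulVec, ← Matrix.dotProduct_mulVec]
        rfl
      have hvB : ∀ j, 0 ≤ Matrix.vecMul v B j := by
        intro j
        simp only [Matrix.vecMul, dotProduct]
        exact Finset.sum_nonneg fun i _ => mul_nonneg (hv i).le (hB i j)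
      have h2 : Matrix.vecMul v B ⬝ᵥ (π (C.mulVec (x t)))
          ≤ Matrix.vecMul v B ⬝ᵥ (Γ₂.mulVec (C.mulVec (x t))) := by
        apply Finset.sum_le_sum
        intro j _
        exact mul_le_mul_of_nonneg_left ((hπ _ hCx) j) (hvB j)
      have h3 : Matrix.vecMul v A ⬝ᵥ (x t) + Matrix.vecMul v B ⬝ᵥ (Γ₂.mulVec (C.mulVec (x t)))
          = Matrix.vecMul v (A + B * Γ₂ * C) ⬝ᵥ (x t) := by
        rw [Matrix.vecMul_add, add_dotProduct]
        congr 1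
        rw [Matrix.dotProduct_mulVec, Matrix.dotProduct_mulVec, Matrix.vecMul_vecMul,
          Matrix.vecMul_vecMul, Matrix.mul_assoc]
      have h4 : Matrix.vecMul v (A + B * Γ₂ * C) ⬝ᵥ (x t) ≤ -ε * (∑ i, v i * x t i) := by
        have hle : Matrix.vecMul v (A + B * Γ₂ * C) ⬝ᵥ (x t) ≤ ∑ j, -ε * v j * x t j := by
          simp only [dotProduct]
          apply Finset.sum_le_sum
          intro j _
          have := mul_le_mul_of_nonneg_right (hvM j) (hxpos j)
          nlinarith
        calc Matrix.vecMul v (A + B * Γ₂ * C) ⬝ᵥ (x t) ≤ ∑ j, -ε * v j * x t j := hle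
          _ = -ε * ∑ i, v i * x t i := by
              rw [Finset.mul_sum]; exact Finset.sum_congr rfl fun j _ => by ring
      calc ∑ i, v i * (A.mulVec (x t) + B.mulVec (π (C.mulVec (x t)))) i
          = Matrix.vecMul v A ⬝ᵥ (x t) + Matrix.vecMul v B ⬝ᵥ (π (C.mulVec (x t))) := h1
        _ ≤ Matrix.vecMul v A ⬝ᵥ (x t) + Matrix.vecMul v B ⬝ᵥ (Γ₂.mulVec (C.mulVec (x t))) := by
            linarith
        _ = Matrix.vecMul v (A + B * Γ₂ * C) ⬝ᵥ (x t) := h3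
        _ ≤ -ε * (∑ i, v i * x t i) := h4
    have hexp : (0:ℝ) < Real.exp (ε * t) := Real.exp_pos _
    nlinarith [mul_le_mul_of_nonneg_left key hexp.le]
  apply antitoneOn_of_deriv_nonpos (convex_Ici 0)
  · intro t ht
    exact (hV t ht).continuousAt.continuousWithinAt
  · intro t ht
    rw [interior_Ici] at ht
    exact (hV t (le_of_lt ht)).differentiableAt.differentiableWithinAt
  · intro t ht
    rw [interior_Ici] at ht
    rw [(hV t ht.le).deriv]
    exact hD t ht.le
end
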